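/- arXiv:1812.09687 — 3 statements merged into one kernel-verified Lean document; each statement's English description precedes it below -/
import Mathlib

section
/- Baum-Welch sufficient statistic identity: the sum over all state sequences σ ∈ S^{n+1} of I(σ_i = s, σ_{i+1} = s')·I(x_i = a)·p_{X,S|Θ}(x, σ | θ) equals f_{x,s}(i-1)·θ_{s';a,s}·b_{x,s'}(i) when x_i = a (and 0 otherwise). -/
/-!
Multiplying the transition weight at position `i` by the indicator of the transition `s → s'`
turns the left side into a plain path sum `∑_σ C ∏_j w_j(σ_j, σ_{j+1}) b_n(σ_n)`. A path sum
equals `∑_r F_n(r) b_n(r)` for the forward recursion `F` of its weights, and `∑_r F_k(r) B_k(r)`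
does not change with `k` along a range where `B` satisfies the backward recursion. Moving from
`k = n` down to `k = i + 1`, where `w` agrees with `θ`, and unfolding one forward step (before
`i` the forward recursion is that of `f`) leaves `f(i) θ_{s';a,s} b(i+1)`.
-/

open Finset

namespace Trellis

variable {S R : Type*} [Fintype S] [CommSemiring R]

def forward (w : ℕ → S → S → R) (φ : S → R) : ℕ → S → R
  | 0 => φ
  | k + 1 => fun r => ∑ u, forward w φ k u * w k u r

variable (w : ℕ → S → S → R) (φ : S → R)

lemma forward_succ (k : ℕ) (r : S) :
    forward w φ (k + 1) r = ∑ u, forward w φ k u * w k u r := rfl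

theorem sum_mul_prod_mul_eq_sum_forward (m : ℕ) (ψ : S → R) :
    ∑ σ : Fin (m + 1) → S, φ (σ 0) * (∏ j : Fin m, w j (σ j.castSucc) (σ j.succ)) *
      ψ (σ (Fin.last m)) = ∑ r, forward w φ m r * ψ r := by
  induction m generalizing ψ with
  | zero =>
    rw [← (Equiv.funUnique (Fin 1) S).symm.sum_comp]
    simp [forward]
  | succ m ih =>
    rw [← (Fin.snocEquiv fun _ => S).sum_comp, Fintype.sum_prod_type_right]
    calc _ = ∑ τ : Fin (m + 1) → S, φ (τ 0) * (∏ j : Fin m, w j (τ j.castSucc) (τ j.succ)) *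
          ∑ u, w m (τ (Fin.last m)) u * ψ u := by
          refine sum_congr rfl fun τ _ => ?_
          rw [mul_sum]
          refine sum_congr rfl fun u _ => ?_
          simp only [Fin.snocEquiv_apply, Fin.prod_univ_castSucc, Fin.succ_castSucc,
            Fin.snoc_castSucc, Fin.succ_last, Fin.snoc_last, Fin.val_castSucc, Fin.val_last]
          rw [← Fin.castSucc_zero, Fin.snoc_castSucc]
          ring
      _ = _ := by
          rw [ih fun r => ∑ u, w m r u * ψ u]
          simp only [forward_succ, mul_sum, sum_mul, mul_assoc]
          exact sum_comm

theorem forward_eq_of_recursion {F : ℕ → S → R} {m : ℕ} (h0 : F 0 = φ)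
    (hF : ∀ k < m, ∀ r, F (k + 1) r = ∑ u, F k u * w k u r) :
    ∀ k ≤ m, forward w φ k = F k := by
  intro k hk
  induction k with
  | zero => exact h0.symm
  | succ k ih =>
    funext r
    rw [forward_succ, hF k hk, ih (by omega)]

theorem sum_forward_mul_backward_eq {B : ℕ → S → R} {m n : ℕ} (hmn : m ≤ n)
    (hB : ∀ k, m ≤ k → k < n → ∀ r, B k r = ∑ u, w k r u * B (k + 1) u) :
    ∑ r, forward w φ n r * B n r = ∑ r, forward w φ m r * B m r := by
  induction n, hmn using Nat.le_induction with
  | base => rfl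
  | succ n hmn ih =>
    rw [← ih fun k hk hkn => hB k hk (by omega)]
    simp only [forward_succ, hB n hmn (by omega), mul_sum, sum_mul, mul_assoc]
    exact sum_comm

omit [Fintype S] in
theorem indicator_mul_prod_eq_prod [DecidableEq S] {n : ℕ} (θ : Fin n → S → S → R)
    (σ : Fin (n + 1) → S) (i : Fin n) (s s' : S) :
    (if σ i.castSucc = s ∧ σ i.succ = s' then 1 else 0) * ∏ j, θ j (σ j.castSucc) (σ j.succ) =
      ∏ j, θ j (σ j.castSucc) (σ j.succ) *
        if j = i then (if σ j.castSucc = s ∧ σ j.succ = s' then 1 else 0) else 1 := by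
  rw [prod_mul_distrib, prod_ite_eq', if_pos (mem_univ i), mul_comm]

end Trellis

open Trellis in
/-- Positions are zero-indexed: the paper's `f_{x,s}(i-1)` is `fa i s`, its `b_{x,s'}(i)` is
`bb (i + 1) s'`, and `θ a s s'` is `θ_{s';a,s}`. -/
theorem stmt_16 {A S : Type*} [Fintype A] [Fintype S]
    [DecidableEq A] [DecidableEq S]
    {n : ℕ} (x : Fin n → A)
    (θ : A → S → S → ℝ)
    (fa : ℕ → S → ℝ)
    (hf0 : ∀ r : S, fa 0 r = 1 / ((Fintype.card S : ℝ) * (Fintype.card A : ℝ) ^ n))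
    (hfi : ∀ (i : ℕ) (hi : i < n) (r : S),
      fa (i + 1) r = ∑ s : S, fa i s * θ (x ⟨i, hi⟩) s r)
    (bb : ℕ → S → ℝ)
    (hbn : ∀ r : S, bb n r = 1)
    (hbi : ∀ (i : ℕ) (hi : i < n) (r : S),
      bb i r = ∑ s : S, θ (x ⟨i, hi⟩) r s * bb (i + 1) s)
    (i : Fin n) (s s' : S) (a : A) :
    ∑ σ : Fin (n + 1) → S,
        (if σ i.castSucc = s ∧ σ i.succ = s' then (1 : ℝ) else 0) *
          (if x i = a then (1 : ℝ) else 0) *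
            ((1 / ((Fintype.card S : ℝ) * (Fintype.card A : ℝ) ^ n)) *
              ∏ j : Fin n, θ (x j) (σ j.castSucc) (σ j.succ))
      = if x i = a then fa i s * θ a s s' * bb (i + 1) s' else 0 := by
  by_cases hxa : x i = a
  swap
  · simp [hxa]
  subst hxa
  simp only [if_true, mul_one]
  set C : ℝ := 1 / ((Fintype.card S : ℝ) * (Fintype.card A : ℝ) ^ n)
  set w : ℕ → S → S → ℝ := fun k u v => if hk : k < n then
    θ (x ⟨k, hk⟩) u v * if k = i then (if u = s ∧ v = s' then 1 else 0) else 1 else 0 with hw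
  have hsummand : ∀ σ : Fin (n + 1) → S,
      (if σ i.castSucc = s ∧ σ i.succ = s' then (1 : ℝ) else 0) *
        (C * ∏ j : Fin n, θ (x j) (σ j.castSucc) (σ j.succ)) =
      C * (∏ j : Fin n, w j (σ j.castSucc) (σ j.succ)) * bb n (σ (Fin.last n)) := by
    intro σ
    rw [hbn, mul_one, mul_left_comm, indicator_mul_prod_eq_prod]
    simp [hw, Fin.val_inj]
  have hfa : ∀ k ≤ (i : ℕ), forward w (fun _ => C) k = fa k :=
    forward_eq_of_recursion w _ (funext hf0) fun k hk r => by
      simp [hfi k (by omega), hw, (by omega : k < n), hk.ne]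
  have hbb : ∀ k, (i : ℕ) < k → k < n → ∀ r, bb k r = ∑ u, w k r u * bb (k + 1) u :=
    fun k hik hkn r => by simp [hbi k hkn, hw, hkn, hik.ne']
  calc _ = ∑ σ : Fin (n + 1) → S,
        C * (∏ j : Fin n, w j (σ j.castSucc) (σ j.succ)) * bb n (σ (Fin.last n)) :=
        sum_congr rfl fun σ _ => hsummand σ
    _ = ∑ r, forward w (fun _ => C) n r * bb n r :=
        sum_mul_prod_mul_eq_sum_forward w (fun _ => C) n (bb n)
    _ = ∑ r, forward w (fun _ => C) (i + 1) r * bb (i + 1) r :=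
        sum_forward_mul_backward_eq w _ i.isLt hbb
    _ = fa i s * θ (x i) s s' * bb (i + 1) s' := by
        simp only [forward_succ, hfa i le_rfl]
        simp [hw, ite_and]
end

section
/- The expected transition counts v_{s';a,s} = Σ_{x∈Σⁿ} (u_x / p_{X|Θ}(x|θ)) · Σ_{i=1}^n I(x_i = a) · Σ_{σ: σ_i=s, σ_{i+1}=s'} p_{X,S|Θ}(x,σ|θ) can be computed via forward-backward: v_{s';a,s} = Σ_x (u_x / p_{X|Θ}(x|θ)) · Σ_{i: x_i = a} f_{x,s}(i-1)·θ_{s';a,s}·b_{x,s'}(i). -/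
/-!
Split a state path `σ` at its first state, `σ = Fin.cons r τ`. Summing out the first state turns
the initial weight `f 0` into `f 1` and shortens the path by one step, so induction on the length
moves the marked transition to the front. There the first state is pinned to `s`, the second to
`s'`, and the sum over the remaining tail is the backward recursion unrolled. The normalising
constant of `p_{X,S}` is the initial forward value, so it needs no separate treatment.
-/

open Finset

namespace ForwardBackward

variable {S R : Type*} [CommSemiring R]

lemma sum_fun_succ [Fintype S] {n : ℕ} (F : (Fin (n + 1) → S) → R) :
    ∑ σ, F σ = ∑ r, ∑ τ : Fin n → S, F (Fin.cons r τ) := by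
  rw [← (Fin.consEquiv fun _ => S).sum_comp, Fintype.sum_prod_type]
  rfl

def pathWeight {n : ℕ} (w : Fin n → S → S → R) (σ : Fin (n + 1) → S) : R :=
  ∏ j, w j (σ j.castSucc) (σ j.succ)

lemma pathWeight_cons {n : ℕ} (w : Fin (n + 1) → S → S → R) (r : S) (τ : Fin (n + 1) → S) :
    pathWeight w (Fin.cons r τ) = w 0 r (τ 0) * pathWeight (fun j => w j.succ) τ := by
  simp [pathWeight, Fin.prod_univ_succ]

lemma sum_pathWeight_cons_eq_backward [Fintype S] {n : ℕ} (w : Fin n → S → S → R) (b : ℕ → S → R)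
    (hbn : ∀ r, b n r = 1)
    (hbi : ∀ (i : ℕ) (hi : i < n) (r : S), b i r = ∑ t, w ⟨i, hi⟩ r t * b (i + 1) t) (r : S) :
    ∑ τ : Fin n → S, pathWeight w (Fin.cons r τ) = b 0 r := by
  induction n generalizing b r with
  | zero => simp [pathWeight, hbn]
  | succ n ih =>
    have tail := ih (fun j => w j.succ) (fun k => b (k + 1)) hbn
      (fun i hi r => hbi (i + 1) (by omega) r)
    simp only [sum_fun_succ, pathWeight_cons, Fin.cons_zero, ← mul_sum, tail]
    exact (hbi 0 n.succ_pos r).symm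

lemma sum_pathWeight_transition_eq_forward_mul_backward [Fintype S] [DecidableEq S] {n : ℕ}
    (w : Fin n → S → S → R) (f b : ℕ → S → R)
    (hfi : ∀ (i : ℕ) (hi : i < n) (r : S), f (i + 1) r = ∑ s, f i s * w ⟨i, hi⟩ s r)
    (hbn : ∀ r, b n r = 1)
    (hbi : ∀ (i : ℕ) (hi : i < n) (r : S), b i r = ∑ t, w ⟨i, hi⟩ r t * b (i + 1) t)
    (i : Fin n) (s s' : S) :
    ∑ σ : Fin (n + 1) → S,
        (if σ i.castSucc = s ∧ σ i.succ = s' then f 0 (σ 0) * pathWeight w σ else 0)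
      = f i s * w i s s' * b (i + 1) s' := by
  induction n generalizing f b with
  | zero => exact i.elim0
  | succ n ih =>
    induction i using Fin.cases with
    | zero =>
      have tail := sum_pathWeight_cons_eq_backward (fun j => w j.succ) (fun k => b (k + 1)) hbn
        (fun i hi r => hbi (i + 1) (by omega) r) s'
      simp only [sum_fun_succ (n := n + 1), sum_fun_succ (n := n), pathWeight_cons, Fin.cons_zero,
        Fin.castSucc_zero, Fin.succ_zero_eq_one, Fin.cons_one, ite_and]
      simp [sum_ite_eq', ← mul_sum, tail, mul_assoc]
    | succ i =>
      have shifted := ih (fun j => w j.succ) (fun k => f (k + 1)) (fun k => b (k + 1))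
        (fun k hk r => hfi (k + 1) (by omega) r) hbn (fun k hk r => hbi (k + 1) (by omega) r) i
      rw [sum_fun_succ, sum_comm]
      have sum_first (τ : Fin (n + 1) → S) :
          ∑ r, f 0 r * (w 0 r (τ 0) * pathWeight (fun j => w j.succ) τ)
            = f 1 (τ 0) * pathWeight (fun j => w j.succ) τ := by
        simp only [hfi 0 n.succ_pos, sum_mul, mul_assoc]
        rfl
      simp only [pathWeight_cons, ← Fin.succ_castSucc, Fin.cons_succ, Fin.cons_zero,
        sum_ite_irrel, sum_const_zero, sum_first]
      simpa using shifted

end ForwardBackward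

/-- Positions are zero-indexed: the paper's `f_{x,s}(i-1)` is `fa x ↑i s`, its `b_{x,s'}(i)` is
`bb x (↑i+1) s'`, and `θ a s s'` is `θ_{s';a,s}`. -/
theorem stmt_17_general {A S : Type*} [Fintype A] [Fintype S]
    [DecidableEq A] [DecidableEq S]
    {n : ℕ}
    (θ : A → S → S → ℝ)
    (u : (Fin n → A) → ℝ)
    (pXS : (Fin n → A) → (Fin (n + 1) → S) → ℝ)
    (hpXS : ∀ x σ, pXS x σ =
      (1 / ((Fintype.card S : ℝ) * (Fintype.card A : ℝ) ^ n)) *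
        ∏ j : Fin n, θ (x j) (σ j.castSucc) (σ j.succ))
    (pX : (Fin n → A) → ℝ)
    (fa : (Fin n → A) → ℕ → S → ℝ)
    (hf0 : ∀ (x : Fin n → A) (r : S),
      fa x 0 r = 1 / ((Fintype.card S : ℝ) * (Fintype.card A : ℝ) ^ n))
    (hfi : ∀ (x : Fin n → A) (i : ℕ) (hi : i < n) (r : S),
      fa x (i + 1) r = ∑ s : S, fa x i s * θ (x ⟨i, hi⟩) s r)
    (bb : (Fin n → A) → ℕ → S → ℝ)
    (hbn : ∀ (x : Fin n → A) (r : S), bb x n r = 1)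
    (hbi : ∀ (x : Fin n → A) (i : ℕ) (hi : i < n) (r : S),
      bb x i r = ∑ s : S, θ (x ⟨i, hi⟩) r s * bb x (i + 1) s) :
    ∀ (a : A) (s s' : S),
      ∑ x : Fin n → A, (u x / pX x) *
          ∑ i : Fin n, (if x i = a then (1 : ℝ) else 0) *
            ∑ σ ∈ Finset.univ.filter
                (fun σ : Fin (n + 1) → S => σ i.castSucc = s ∧ σ i.succ = s'),
              pXS x σ
        = ∑ x : Fin n → A, (u x / pX x) *
            ∑ i : Fin n,
              if x i = a then fa x i s * θ a s s' * bb x (i + 1) s' else 0 := by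
  intro a s s'
  refine sum_congr rfl fun x _ => congrArg _ (sum_congr rfl fun i _ => ?_)
  split_ifs with hxa
  · have path := ForwardBackward.sum_pathWeight_transition_eq_forward_mul_backward
      (fun j => θ (x j)) (fa x) (bb x) (hfi x) (hbn x) (hbi x) i s s'
    simp only [ForwardBackward.pathWeight, hf0, ← hpXS, ← sum_filter, hxa] at path
    rw [one_mul, path]
  · rw [zero_mul]

/-- the expected transition counts
`v_{s';a,s} = Σ_x (u_x / p_{X|Θ}(x|θ)) · Σ_i I(x_i = a) · Σ_{σ : σ_i=s, σ_{i+1}=s'} p_{X,S|Θ}(x,σ|θ)`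
can be computed via forward-backward probabilities:
`v_{s';a,s} = Σ_x (u_x / p_{X|Θ}(x|θ)) · Σ_{i : x_i = a} f_{x,s}(i-1)·θ_{s';a,s}·b_{x,s'}(i)`.
Positions are zero-indexed here, so the paper's `f_{x,s}(i-1)` is `fa x ↑i s`
and `b_{x,s'}(i)` is `bb x (↑i+1) s'`.  `θ a s s'` denotes `θ_{s';a,s}`. -/
theorem stmt_17 {A S : Type*} [Fintype A] [Fintype S]
    [DecidableEq A] [DecidableEq S]
    {n : ℕ}
    (θ : A → S → S → ℝ)
    (u : (Fin n → A) → ℝ) (hu : ∀ x, 0 ≤ u x)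
    (pXS : (Fin n → A) → (Fin (n + 1) → S) → ℝ)
    (hpXS : ∀ x σ, pXS x σ =
      (1 / ((Fintype.card S : ℝ) * (Fintype.card A : ℝ) ^ n)) *
        ∏ j : Fin n, θ (x j) (σ j.castSucc) (σ j.succ))
    (pX : (Fin n → A) → ℝ)
    (hpX : ∀ x, pX x = ∑ σ : Fin (n + 1) → S, pXS x σ)
    (hpos : ∀ x, 0 < u x → 0 < pX x)
    (fa : (Fin n → A) → ℕ → S → ℝ)
    (hf0 : ∀ (x : Fin n → A) (r : S),
      fa x 0 r = 1 / ((Fintype.card S : ℝ) * (Fintype.card A : ℝ) ^ n))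
    (hfi : ∀ (x : Fin n → A) (i : ℕ) (hi : i < n) (r : S),
      fa x (i + 1) r = ∑ s : S, fa x i s * θ (x ⟨i, hi⟩) s r)
    (bb : (Fin n → A) → ℕ → S → ℝ)
    (hbn : ∀ (x : Fin n → A) (r : S), bb x n r = 1)
    (hbi : ∀ (x : Fin n → A) (i : ℕ) (hi : i < n) (r : S),
      bb x i r = ∑ s : S, θ (x ⟨i, hi⟩) r s * bb x (i + 1) s) :
    ∀ (a : A) (s s' : S),
      ∑ x : Fin n → A, (u x / pX x) *
          ∑ i : Fin n, (if x i = a then (1 : ℝ) else 0) *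
            ∑ σ ∈ Finset.univ.filter
                (fun σ : Fin (n + 1) → S => σ i.castSucc = s ∧ σ i.succ = s'),
              pXS x σ
        = ∑ x : Fin n → A, (u x / pX x) *
            ∑ i : Fin n,
              if x i = a then fa x i s * θ a s s' * bb x (i + 1) s' else 0 :=
  stmt_17_general θ u pXS hpXS pX fa hf0 hfi bb hbn hbi
end

section
/- For the p-adic acceptor, for every word x = x₁…x_k ∈ {0,…,p-1}*, the acceptance probability π·P(x)·f equals the real number with p-adic expansion 0.x_k x_{k-1} … x₁, i.e., Σ_{j=1}^{k} x_j · p^{-(k-j+1)}. -/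
open Matrix

lemma stmt_18_aux (p : ℕ) (hp : 2 ≤ p)
    (Pa : Fin p → Matrix (Fin 2) (Fin 2) ℝ)
    (hPa : ∀ a : Fin p,
      Pa a = !![1 - (a : ℝ) / p, (a : ℝ) / p;
                1 - ((a : ℝ) + 1) / p, ((a : ℝ) + 1) / p])
    (x : List (Fin p)) :
    ((x.map Pa).prod).mulVec ![0, 1]
      = ![∑ j : Fin x.length, (x.get j : ℝ) / (p : ℝ) ^ (x.length - (j : ℕ)),
          (∑ j : Fin x.length, (x.get j : ℝ) / (p : ℝ) ^ (x.length - (j : ℕ)))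
            + 1 / (p : ℝ) ^ x.length] := by
  have hp0 : (p : ℝ) ≠ 0 := by positivity
  induction x with
  | nil =>
      funext i
      fin_cases i <;> simp
  | cons a t ih =>
      have hsum : (∑ j : Fin (a::t).length,
            (((a::t).get j : ℕ) : ℝ) / (p : ℝ) ^ ((a::t).length - (j : ℕ)))
          = (a : ℝ) / (p : ℝ) ^ (t.length + 1)
            + ∑ j : Fin t.length, ((t.get j : ℕ) : ℝ) / (p : ℝ) ^ (t.length - (j : ℕ)) := by
        simp [Fin.sum_univ_succ, Nat.succ_sub_succ]
      funext i
      rw [List.map_cons, List.prod_cons, ← Matrix.mulVec_mulVec, ih, hPa]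
      fin_cases i <;>
      · simp only [Matrix.mulVec, dotProduct, Fin.sum_univ_two,
          Matrix.cons_val', Matrix.cons_val_zero, Matrix.cons_val_one,
          Matrix.head_cons, Matrix.empty_val', Matrix.cons_val_fin_one,
          Matrix.head_fin_const, Fin.isValue, Fin.zero_eta, Fin.mk_one, Matrix.of_apply]
        rw [hsum]
        set S : ℝ := ∑ j : Fin t.length, ((t.get j : ℕ) : ℝ) / (p : ℝ) ^ (t.length - (j : ℕ))
          with hS
        simp only [List.length_cons, pow_succ]
        field_simp
        ring

/-- for the `p`-adic acceptor, the acceptance probability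
`π·P(x)·f` of a word `x = x₁…x_k` equals the real number with `p`-adic
expansion `0.x_k x_{k-1} … x₁ = Σ_{j=1}^k x_j·p^{-(k-j+1)}`. -/
theorem stmt_18 (p : ℕ) (hp : 2 ≤ p)
    (Pa : Fin p → Matrix (Fin 2) (Fin 2) ℝ)
    (hPa : ∀ a : Fin p,
      Pa a = !![1 - (a : ℝ) / p, (a : ℝ) / p;
                1 - ((a : ℝ) + 1) / p, ((a : ℝ) + 1) / p])
    (x : List (Fin p)) :
    (![1, 0] : Fin 2 → ℝ) ⬝ᵥ ((x.map Pa).prod).mulVec ![0, 1]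
      = ∑ j : Fin x.length, (x.get j : ℝ) / (p : ℝ) ^ (x.length - (j : ℕ)) := by
  rw [stmt_18_aux p hp Pa hPa x]
  simp [dotProduct, Fin.sum_univ_two]
end
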